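/- If p is a point in the interior of a digital Jordan curve J in the Khalimsky plane and A(p) ∩ J is a proper nonempty connected subset of A(p), then p is a weak point of int(J); in particular, if p is pure then A(p) \ J is a COTS-arc and hence contractible. -/

import Mathlib

open Set

/-- The minimal open neighborhood of a point in a topological space. -/
def minOpenNhd {X : Type*} (t : TopologicalSpace X) (x : X) : Set X :=
  ⋂₀ {U : Set X | t.IsOpen U ∧ x ∈ U}

/-- The specialization-style preorder: `x ≤ y` iff `U_x ⊆ U_y`. -/
def specLE {X : Type*} (t : TopologicalSpace X) (x y : X) : Prop :=
  minOpenNhd t x ⊆ minOpenNhd t y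

/-- Two points are adjacent if distinct and comparable in the specialization order. -/
def Adjacent {X : Type*} (t : TopologicalSpace X) (x y : X) : Prop :=
  x ≠ y ∧ (specLE t x y ∨ specLE t y x)

/-- The adjacency set of a point. -/
def adjSet {X : Type*} (t : TopologicalSpace X) (x : X) : Set X := {y | Adjacent t x y}

/-- A COTS: a connected space in which every 3-point subset has a point separating
the other two. -/
def IsCOTS {X : Type*} (t : TopologicalSpace X) : Prop :=
  @ConnectedSpace X t ∧
    ∀ Y : Set X, Y.ncard = 3 →
      ∃ y ∈ Y, ∃ a ∈ Y \ {y}, ∃ b ∈ Y \ {y},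
        @connectedComponentIn X t {y}ᶜ a ≠ @connectedComponentIn X t {y}ᶜ b

/-- An endpoint of a COTS: a point with at most one neighbor. -/
def IsEndpoint {X : Type*} (t : TopologicalSpace X) (x : X) : Prop :=
  (adjSet t x).ncard ≤ 1

/-- A COTS-path: the continuous image of a finite COTS. -/
def IsCOTSPath {Y : Type*} (tY : TopologicalSpace Y) (P : Set Y) : Prop :=
  ∃ (C : Type) (tC : TopologicalSpace C), Finite C ∧ IsCOTS tC ∧
    ∃ f : C → Y, @Continuous C Y tC tY f ∧ Set.range f = P

/-- A COTS-path with prescribed start and end points. -/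
def IsCOTSPathFromTo {Y : Type*} (tY : TopologicalSpace Y) (P : Set Y) (a b : Y) : Prop :=
  ∃ (C : Type) (tC : TopologicalSpace C), Finite C ∧ IsCOTS tC ∧
    ∃ f : C → Y, @Continuous C Y tC tY f ∧ Set.range f = P ∧
      ∃ c₀ c₁ : C, IsEndpoint tC c₀ ∧ IsEndpoint tC c₁ ∧ f c₀ = a ∧ f c₁ = b

/-- A COTS-arc: the homeomorphic image of a finite COTS. -/
def IsCOTSArc {Y : Type*} (tY : TopologicalSpace Y) (A : Set Y) : Prop :=
  ∃ (C : Type) (tC : TopologicalSpace C), Finite C ∧ IsCOTS tC ∧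
    ∃ f : C → Y, @Topology.IsEmbedding C Y tC tY f ∧ Set.range f = A

/-- A COTS-arc with prescribed endpoints. -/
def IsCOTSArcFromTo {Y : Type*} (tY : TopologicalSpace Y) (A : Set Y) (a b : Y) : Prop :=
  ∃ (C : Type) (tC : TopologicalSpace C), Finite C ∧ IsCOTS tC ∧
    ∃ f : C → Y, @Topology.IsEmbedding C Y tC tY f ∧ Set.range f = A ∧
      ∃ c₀ c₁ : C, IsEndpoint tC c₀ ∧ IsEndpoint tC c₁ ∧ f c₀ = a ∧ f c₁ = b

/-- The COTS-distance: one less than the minimal cardinality of a COTS-arc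
joining two points (`⊤` if there is no such arc). -/
noncomputable def cotsDist {X : Type*} (t : TopologicalSpace X) (x y : X) : ℕ∞ :=
  sInf {n : ℕ∞ | ∃ A : Set X, IsCOTSArcFromTo t A x y ∧ (A.ncard : ℕ∞) = n + 1}

/-- The Khalimsky topology on ℤ. -/
def khal : TopologicalSpace ℤ :=
  TopologicalSpace.generateFrom
    {s : Set ℤ | ∃ n : ℤ, (Odd n ∧ s = {n}) ∨ (Even n ∧ s = {n - 1, n, n + 1})}

/-- The Khalimsky plane topology on ℤ × ℤ. -/
def khalPlane : TopologicalSpace (ℤ × ℤ) := @instTopologicalSpaceProd ℤ ℤ khal khal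

/-- A point of the Khalimsky plane is pure if its coordinates have the same parity. -/
def IsPurePt (p : ℤ × ℤ) : Prop := (Even p.1 ∧ Even p.2) ∨ (Odd p.1 ∧ Odd p.2)

/-- A digital Jordan curve: a finite set of at least 4 points such that removing
any point leaves a COTS-arc. -/
def IsJordanCurve {X : Type*} (t : TopologicalSpace X) (J : Set X) : Prop :=
  J.Finite ∧ 4 ≤ J.ncard ∧ ∀ j ∈ J, IsCOTSArc t (J \ {j})

/-- The interior of a digital Jordan curve in the Khalimsky plane: the union of the
finite (bounded) connected components of its complement. -/
def jInterior (J : Set (ℤ × ℤ)) : Set (ℤ × ℤ) :=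
  ⋃₀ {S | ∃ p ∉ J, S = @connectedComponentIn _ khalPlane Jᶜ p ∧ S.Finite}

/-- A weak point of a subset `S` of the Khalimsky plane: the punctured minimal open
neighborhood or the punctured closure, intersected with `S`, is contractible. -/
def IsWeakPt (S : Set (ℤ × ℤ)) (p : ℤ × ℤ) : Prop :=
  @ContractibleSpace (↥((minOpenNhd khalPlane p \ {p}) ∩ S))
      (TopologicalSpace.induced Subtype.val khalPlane) ∨
  @ContractibleSpace (↥((@closure _ khalPlane {p} \ {p}) ∩ S))
      (TopologicalSpace.induced Subtype.val khalPlane)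

/-!
Everything happens inside the adjacency set `A(p)`. The punctured minimal neighbourhood and the
punctured closure of `p` both lie in `A(p)`, and a neighbour of `p` off `J` lies in the component
of `p` in the complement of `J`, so `p` is weak as soon as one of these two punctured sets minus
`J` is contractible.

For a mixed point they are the two antipodal pairs of the 4-cycle `A(p)`, and connectedness of
`A(p) ∩ J` forces one pair to meet `J` in exactly one point, leaving a single point. For a pure
point one of them is the whole 8-cycle `A(p)`, and removing the proper nonempty connected set
`A(p) ∩ J` leaves a run of at most seven consecutive points. Such a run is a fence for the
specialization order, hence a COTS-arc, and it is contractible: truncating it at consecutive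
points gives pointwise comparable, hence homotopic, maps from the identity down to a constant.
-/

open Filter Topology TopologicalSpace Function unitInterval

section Specialization

variable {X Y : Type*} [t : TopologicalSpace X] [TopologicalSpace Y] {x y : X}

theorem mem_minOpenNhd_iff : y ∈ minOpenNhd t x ↔ y ⤳ x := by
  simp only [minOpenNhd, mem_sInter, mem_ofPred_eq, and_imp, specializes_iff_forall_open]
  rfl

theorem specLE_iff_specializes : specLE t x y ↔ x ⤳ y :=
  ⟨fun h => mem_minOpenNhd_iff.1 (h (mem_minOpenNhd_iff.2 specializes_rfl)),
    fun h _ hz => mem_minOpenNhd_iff.2 ((mem_minOpenNhd_iff.1 hz).trans h)⟩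

theorem mem_adjSet_iff : y ∈ adjSet t x ↔ x ≠ y ∧ (x ⤳ y ∨ y ⤳ x) := by
  simp only [adjSet, Adjacent, mem_ofPred_eq, specLE_iff_specializes]

theorem minOpenNhd_diff_singleton_subset_adjSet : minOpenNhd t x \ {x} ⊆ adjSet t x :=
  fun _ ⟨hy, hyx⟩ => mem_adjSet_iff.2 ⟨Ne.symm hyx, Or.inr (mem_minOpenNhd_iff.1 hy)⟩

theorem closure_singleton_diff_subset_adjSet : closure {x} \ {x} ⊆ adjSet t x :=
  fun _ ⟨hy, hyx⟩ => mem_adjSet_iff.2 ⟨Ne.symm hyx, Or.inl (specializes_iff_mem_closure.2 hy)⟩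

theorem minOpenNhd_diff_singleton_eq_adjSet (h : ∀ y ∈ adjSet t x, y ⤳ x) :
    minOpenNhd t x \ {x} = adjSet t x :=
  minOpenNhd_diff_singleton_subset_adjSet.antisymm fun y hy =>
    ⟨mem_minOpenNhd_iff.2 (h y hy), (mem_adjSet_iff.1 hy).1.symm⟩

theorem closure_singleton_diff_eq_adjSet (h : ∀ y ∈ adjSet t x, x ⤳ y) :
    closure {x} \ {x} = adjSet t x :=
  closure_singleton_diff_subset_adjSet.antisymm fun y hy =>
    ⟨specializes_iff_mem_closure.1 (h y hy), (mem_adjSet_iff.1 hy).1.symm⟩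

theorem Specializes.isPreconnected_pair (h : x ⤳ y) : IsPreconnected ({x, y} : Set X) :=
  isPreconnected_singleton.subset_closure (singleton_subset_iff.2 (mem_insert x {y}))
    (insert_subset_iff.2 ⟨subset_closure rfl, singleton_subset_iff.2 h.mem_closure⟩)

theorem isPreconnected_pair_of_specializes_or (h : x ⤳ y ∨ y ⤳ x) :
    IsPreconnected ({x, y} : Set X) :=
  h.elim Specializes.isPreconnected_pair fun h => pair_comm x y ▸ h.isPreconnected_pair

theorem not_isPreconnected_pair [AlexandrovDiscrete X] (hxy : ¬x ⤳ y) (hyx : ¬y ⤳ x) :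
    ¬IsPreconnected ({x, y} : Set X) := by
  intro h
  obtain ⟨z, hz, hzx, hzy⟩ := h (nhdsKer {x}) (nhdsKer {y}) isOpen_nhdsKer isOpen_nhdsKer
    (insert_subset_iff.2 ⟨Or.inl (subset_nhdsKer rfl), singleton_subset_iff.2
      (Or.inr (subset_nhdsKer rfl))⟩)
    ⟨x, mem_insert x _, subset_nhdsKer rfl⟩ ⟨y, mem_insert_of_mem x rfl, subset_nhdsKer rfl⟩
  rw [mem_nhdsKer_singleton] at hzx hzy
  rcases hz with rfl | rfl
  exacts [hxy hzy, hyx hzx]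

theorem continuous_of_forall_specializes [AlexandrovDiscrete X] {f : X → Y}
    (hf : ∀ x y, x ⤳ y → f x ⤳ f y) : Continuous f :=
  continuous_def.2 fun _ hU =>
    isOpen_iff_forall_specializes.2 fun x y hxy hy => (hf x y hxy).mem_open hU hy

open Classical in
/-- Jumping from `f` to `g` at time `1` is continuous because every open set containing `g x`
contains `f x`. -/
theorem ContinuousMap.homotopic_of_forall_specializes (f g : C(X, Y)) (h : ∀ x, f x ⤳ g x) :
    f.Homotopic g :=
  ⟨{ toFun := {q : I × X | q.1 < 1}.piecewise (f ∘ Prod.snd) (g ∘ Prod.snd)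
     continuous_toFun :=
        (isOpen_lt continuous_fst continuous_const).continuous_piecewise_of_specializes
          (f.continuous.comp continuous_snd) (g.continuous.comp continuous_snd) fun q => h q.2
     map_zero_left := fun x => by simp [piecewise]
     map_one_left := fun x => by simp [piecewise] }⟩

end Specialization

theorem contractibleSpace_diff_pair {X : Type*} [TopologicalSpace X] {a b : X} {J : Set X}
    (h : a ∈ J ↔ b ∉ J) : ContractibleSpace ↥(({a, b} : Set X) \ J) := by
  obtain ⟨c, hc⟩ : ∃ c, ({a, b} : Set X) \ J = {c} := by
    by_cases ha : a ∈ J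
    · exact ⟨b, by ext z; aesop⟩
    · exact ⟨a, by ext z; aesop⟩
  rw [hc]
  infer_instance

section GenerateFrom

variable {α : Type*} {g : Set (Set α)} {B : α → Set α}

theorem nhds_generateFrom_eq_principal (hB : ∀ a, B a ∈ g ∧ a ∈ B a)
    (hmin : ∀ a, ∀ s ∈ g, a ∈ s → B a ⊆ s) (a : α) : @nhds α (generateFrom g) a = 𝓟 (B a) := by
  rw [nhds_generateFrom]
  exact le_antisymm (iInf₂_le _ ⟨(hB a).2, (hB a).1⟩)
    (le_iInf₂ fun s hs => principal_mono.2 (hmin a s hs.2 hs.1))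

theorem specializes_generateFrom_iff (hB : ∀ a, B a ∈ g ∧ a ∈ B a)
    (hmin : ∀ a, ∀ s ∈ g, a ∈ s → B a ⊆ s) {x y : α} :
    @Specializes α (generateFrom g) x y ↔ x ∈ B y := by
  let := generateFrom g
  rw [specializes_iff_pure, nhds_generateFrom_eq_principal hB hmin, le_principal_iff, mem_pure]

theorem alexandrovDiscrete_generateFrom (hB : ∀ a, B a ∈ g ∧ a ∈ B a)
    (hmin : ∀ a, ∀ s ∈ g, a ∈ s → B a ⊆ s) : @AlexandrovDiscrete α (generateFrom g) := by
  let := generateFrom g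
  refine ⟨fun S hS => isOpen_iff_mem_nhds.2 fun a ha => ?_⟩
  rw [nhds_generateFrom_eq_principal hB hmin, mem_principal]
  refine subset_sInter fun s hs => ?_
  rw [← mem_principal, ← nhds_generateFrom_eq_principal hB hmin]
  exact (hS s hs).mem_nhds (ha s hs)

end GenerateFrom

section Fence

variable {X : Type*} [t : TopologicalSpace X] {γ : ℤ → X} {n : ℤ}

structure IsFence (γ : ℤ → X) (n : ℤ) : Prop where
  specializes_or_succ : ∀ i, γ i ⤳ γ (i + 1) ∨ γ (i + 1) ⤳ γ i
  injOn : InjOn γ (Ico 0 n)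
  le_succ_of_specializes : ∀ i ∈ Ico 0 n, ∀ j ∈ Ico 0 n, γ i ⤳ γ j → i ≤ j + 1 ∧ j ≤ i + 1

namespace IsFence

theorem isConnected_image (hγ : IsFence γ n) (hn : 0 < n) : IsConnected (γ '' Ico 0 n) := by
  have hsucc := hγ.specializes_or_succ
  obtain ⟨k, rfl⟩ : ∃ k : ℕ, n = k + 1 := ⟨(n - 1).toNat, by omega⟩
  clear hγ hn
  induction k with
  | zero =>
    rw [show Ico (0 : ℤ) ((0 : ℕ) + 1) = {0} by ext; simp; omega, image_singleton]
    exact isConnected_singleton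
  | succ k ih =>
    have hsplit : γ '' Ico 0 ((k + 1 : ℕ) + 1) = γ '' Ico 0 (k + 1) ∪ {γ k, γ (k + 1)} := by
      ext x
      simp only [mem_image, mem_Ico, mem_union, mem_insert_iff, mem_singleton_iff]
      constructor
      · rintro ⟨i, hi, rfl⟩
        rcases lt_or_eq_of_le (show i ≤ k + 1 by omega) with h | rfl
        exacts [Or.inl ⟨i, ⟨hi.1, h⟩, rfl⟩, Or.inr (Or.inr rfl)]
      · rintro (⟨i, hi, rfl⟩ | rfl | rfl)
        exacts [⟨i, by omega, rfl⟩, ⟨k, by omega, rfl⟩, ⟨k + 1, by omega, rfl⟩]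
    rw [hsplit]
    exact IsConnected.union ⟨γ k, ⟨k, by simp, rfl⟩, mem_insert _ _⟩ ih
      ⟨⟨γ k, mem_insert _ _⟩, isPreconnected_pair_of_specializes_or (hsucc k)⟩

theorem mem_of_isPreconnected [AlexandrovDiscrete X] (hγ : IsFence γ n) {K : Set X}
    (hK : IsPreconnected K) (hKγ : K ⊆ γ '' Ico 0 n) {a m b : ℤ} (ha0 : 0 ≤ a) (ham : a ≤ m)
    (hmb : m ≤ b) (hbn : b < n) (ha : γ a ∈ K) (hb : γ b ∈ K) : γ m ∈ K := by
  by_contra hm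
  -- otherwise the open down-sets of the points before and after `γ m` disconnect `K`
  have ham' : a < m := lt_of_le_of_ne ham fun h => hm (h ▸ ha)
  have hmb' : m < b := lt_of_le_of_ne hmb fun h => hm (h ▸ hb)
  have hopen : ∀ T : Set ℤ, IsOpen (⋃ i ∈ T, nhdsKer {γ i}) :=
    fun _ => isOpen_biUnion fun _ _ => isOpen_nhdsKer
  have hcover : K ⊆ (⋃ i ∈ Ico 0 m, nhdsKer {γ i}) ∪ ⋃ i ∈ Ioo m n, nhdsKer {γ i} := by
    intro x hx
    obtain ⟨i, hi, rfl⟩ := hKγ hx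
    have hself : γ i ∈ nhdsKer {γ i} := subset_nhdsKer rfl
    rcases lt_trichotomy i m with h | rfl | h
    · exact Or.inl (mem_biUnion ⟨hi.1, h⟩ hself)
    · exact absurd hx hm
    · exact Or.inr (mem_biUnion ⟨h, hi.2⟩ hself)
  obtain ⟨x, hxK, hx₁, hx₂⟩ := hK _ _ (hopen _) (hopen _) hcover
    ⟨γ a, ha, mem_biUnion ⟨ha0, ham'⟩ (subset_nhdsKer rfl)⟩
    ⟨γ b, hb, mem_biUnion ⟨hmb', hbn⟩ (subset_nhdsKer rfl)⟩
  obtain ⟨i, hi, rfl⟩ := hKγ hxK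
  obtain ⟨i₁, hi₁, hx₁⟩ := mem_iUnion₂.1 hx₁
  obtain ⟨i₂, hi₂, hx₂⟩ := mem_iUnion₂.1 hx₂
  rw [mem_nhdsKer_singleton] at hx₁ hx₂
  simp only [mem_Ico, mem_Ioo] at hi₁ hi₂
  have h₁ := hγ.le_succ_of_specializes i hi i₁ ⟨hi₁.1, by omega⟩ hx₁
  have h₂ := hγ.le_succ_of_specializes i hi i₂ ⟨by omega, hi₂.2⟩ hx₂
  simp only [mem_Ico] at hi
  obtain rfl : i = m := by omega
  exact hm hxK

theorem connectedComponentIn_ne [AlexandrovDiscrete X] (hγ : IsFence γ n)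
    {a y b : γ '' Ico 0 n} {i j k : ℤ} (hi : 0 ≤ i) (hij : i < j) (hjk : j < k) (hk : k < n)
    (ha : (a : X) = γ i) (hy : (y : X) = γ j) (hb : (b : X) = γ k) :
    connectedComponentIn {y}ᶜ a ≠ connectedComponentIn {y}ᶜ b := by
  have hne : ∀ {z : γ '' Ico 0 n} {l}, l ∈ Ico 0 n → l ≠ j → (z : X) = γ l → z ≠ y :=
    fun hl hlj hz hzy => hlj (hγ.injOn hl ⟨by omega, by omega⟩ (hz ▸ hy ▸ congrArg Subtype.val hzy))
  intro h
  have haC : a ∈ connectedComponentIn {y}ᶜ a :=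
    mem_connectedComponentIn (hne ⟨hi, by omega⟩ hij.ne ha)
  have hbC : b ∈ connectedComponentIn {y}ᶜ a :=
    h ▸ mem_connectedComponentIn (hne ⟨by omega, hk⟩ hjk.ne' hb)
  obtain ⟨z, hzC, hz⟩ := hγ.mem_of_isPreconnected
    (isPreconnected_connectedComponentIn.image _ continuous_subtype_val.continuousOn)
    (image_subset_iff.2 fun z _ => z.2) hi hij.le hjk.le hk ⟨a, haC, ha⟩ ⟨b, hbC, hb⟩
  exact connectedComponentIn_subset _ _ hzC (Subtype.ext (hz.trans hy.symm))

theorem isCOTS [AlexandrovDiscrete X] (hγ : IsFence γ n) (hn : 0 < n) :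
    IsCOTS (induced ((↑) : γ '' Ico 0 n → X) t) := by
  refine ⟨Subtype.connectedSpace (hγ.isConnected_image hn), fun Y hY => ?_⟩
  obtain ⟨u, v, w, huv, huw, hvw, rfl⟩ := ncard_eq_three.1 hY
  have median : ∀ a y b, a ≠ y → b ≠ y → a ∈ ({u, v, w} : Set _) → y ∈ ({u, v, w} : Set _) →
      b ∈ ({u, v, w} : Set _) → connectedComponentIn {y}ᶜ a ≠ connectedComponentIn {y}ᶜ b →
      ∃ y ∈ ({u, v, w} : Set _), ∃ a ∈ ({u, v, w} : Set _) \ {y}, ∃ b ∈ ({u, v, w} : Set _) \ {y},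
        connectedComponentIn {y}ᶜ a ≠ connectedComponentIn {y}ᶜ b :=
    fun a y b hay hby ha hy hb h => ⟨y, hy, a, ⟨ha, hay⟩, b, ⟨hb, hby⟩, h⟩
  obtain ⟨i, hi, hu⟩ := u.2
  obtain ⟨j, hj, hv⟩ := v.2
  obtain ⟨k, hk, hw⟩ := w.2
  have hij : i ≠ j := fun h => huv (Subtype.ext (hu.symm.trans (h ▸ hv)))
  have hik : i ≠ k := fun h => huw (Subtype.ext (hu.symm.trans (h ▸ hw)))
  have hjk : j ≠ k := fun h => hvw (Subtype.ext (hv.symm.trans (h ▸ hw)))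
  simp only [mem_Ico] at hi hj hk
  rcases lt_or_gt_of_ne hij with hij | hij <;> rcases lt_or_gt_of_ne hik with hik | hik <;>
    rcases lt_or_gt_of_ne hjk with hjk | hjk
  · exact median u v w huv hvw.symm (by simp) (by simp) (by simp)
      (hγ.connectedComponentIn_ne hi.1 hij hjk hk.2 hu.symm hv.symm hw.symm)
  · exact median u w v huw hvw (by simp) (by simp) (by simp)
      (hγ.connectedComponentIn_ne hi.1 hik hjk hj.2 hu.symm hw.symm hv.symm)
  · omega
  · exact median w u v huw.symm huv.symm (by simp) (by simp) (by simp)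
      (hγ.connectedComponentIn_ne hk.1 hik hij hj.2 hw.symm hu.symm hv.symm)
  · exact median v u w huv.symm huw.symm (by simp) (by simp) (by simp)
      (hγ.connectedComponentIn_ne hj.1 hij hik hk.2 hv.symm hu.symm hw.symm)
  · omega
  · exact median v w u hvw huw (by simp) (by simp) (by simp)
      (hγ.connectedComponentIn_ne hj.1 hjk hik hi.2 hv.symm hw.symm hu.symm)
  · exact median w v u hvw.symm huv (by simp) (by simp) (by simp)
      (hγ.connectedComponentIn_ne hk.1 hjk hij hi.2 hw.symm hv.symm hu.symm)

end IsFence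

end Fence

theorem IsFence.isCOTSArc {X : Type} [t : TopologicalSpace X] [AlexandrovDiscrete X] {γ : ℤ → X}
    {n : ℤ} (hγ : IsFence γ n) (hn : 0 < n) : IsCOTSArc t (γ '' Ico 0 n) :=
  ⟨γ '' Ico 0 n, _, ((finite_Ico 0 n).image γ).to_subtype, hγ.isCOTS hn, Subtype.val,
    IsEmbedding.subtypeVal, Subtype.range_coe⟩

section FenceTrunc

variable {X : Type*} {γ : ℤ → X} {n : ℤ}

noncomputable def fenceTrunc (γ : ℤ → X) (n : ℤ) (k : ℕ) (x : γ '' Ico 0 n) : γ '' Ico 0 n :=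
  ⟨γ (min (invFunOn γ (Ico 0 n) x) k), mem_image_of_mem γ <| by
    have := invFunOn_mem x.2
    simp only [mem_Ico] at this ⊢
    omega⟩

theorem coe_fenceTrunc (k : ℕ) (x : γ '' Ico 0 n) :
    (fenceTrunc γ n k x : X) = γ (min (invFunOn γ (Ico 0 n) x) k) :=
  rfl

theorem coe_fenceTrunc_zero (x : γ '' Ico 0 n) : (fenceTrunc γ n 0 x : X) = γ 0 := by
  rw [coe_fenceTrunc, Nat.cast_zero, min_eq_right (invFunOn_mem x.2).1]

theorem fenceTrunc_of_le {k : ℕ} (hk : n ≤ k + 1) (x : γ '' Ico 0 n) : fenceTrunc γ n k x = x := by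
  refine Subtype.ext ?_
  have hx : invFunOn γ (Ico 0 n) x < n := (invFunOn_mem x.2).2
  rw [coe_fenceTrunc, min_eq_left (by omega), invFunOn_eq x.2]

theorem fenceTrunc_succ_eq_or (k : ℕ) (x : γ '' Ico 0 n) :
    fenceTrunc γ n (k + 1) x = fenceTrunc γ n k x ∨
      (fenceTrunc γ n k x : X) = γ k ∧ (fenceTrunc γ n (k + 1) x : X) = γ (k + 1) := by
  simp only [Subtype.ext_iff, coe_fenceTrunc]
  rcases le_or_gt (invFunOn γ (Ico 0 n) x) k with h | h
  · left
    rw [min_eq_left h, min_eq_left (by omega)]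
  · right
    rw [min_eq_right h.le, min_eq_right (by omega)]
    push_cast
    exact ⟨rfl, rfl⟩

variable [TopologicalSpace X]

theorem specializes_fenceTrunc_succ {k : ℕ} (h : γ k ⤳ γ (k + 1)) (x : γ '' Ico 0 n) :
    fenceTrunc γ n k x ⤳ fenceTrunc γ n (k + 1) x := by
  rcases fenceTrunc_succ_eq_or k x with h' | ⟨h₁, h₂⟩
  · rw [h']
  · rwa [← IsInducing.subtypeVal.specializes_iff, h₁, h₂]

theorem fenceTrunc_succ_specializes {k : ℕ} (h : γ (k + 1) ⤳ γ k) (x : γ '' Ico 0 n) :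
    fenceTrunc γ n (k + 1) x ⤳ fenceTrunc γ n k x := by
  rcases fenceTrunc_succ_eq_or k x with h' | ⟨h₁, h₂⟩
  · rw [h']
  · rwa [← IsInducing.subtypeVal.specializes_iff, h₁, h₂]

namespace IsFence

theorem continuous_fenceTrunc [AlexandrovDiscrete X] (hγ : IsFence γ n) (k : ℕ) :
    Continuous (fenceTrunc γ n k) := by
  refine continuous_of_forall_specializes fun x y hxy => ?_
  rw [← IsInducing.subtypeVal.specializes_iff] at hxy ⊢
  rw [coe_fenceTrunc, coe_fenceTrunc]
  set i := invFunOn γ (Ico 0 n) x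
  set j := invFunOn γ (Ico 0 n) y
  have hx : γ i = x := invFunOn_eq x.2
  have hy : γ j = y := invFunOn_eq y.2
  have hij := hγ.le_succ_of_specializes i (invFunOn_mem x.2) j (invFunOn_mem y.2) (hx ▸ hy ▸ hxy)
  rcases (by omega : min i k = min j k ∨ (min i k = i ∧ min j k = j)) with h | ⟨hi, hj⟩
  · rw [h]
  · rwa [hi, hj, hx, hy]

/-- Truncating the fence at `k` and at `k + 1` are pointwise comparable maps, so the truncations
link the constant map (`k = 0`) to the identity (`k = n - 1`) through homotopies. -/
theorem contractibleSpace [AlexandrovDiscrete X] (hγ : IsFence γ n) (hn : 0 < n) :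
    ContractibleSpace (γ '' Ico 0 n) := by
  let R : ℕ → C(γ '' Ico 0 n, γ '' Ico 0 n) := fun k =>
    ⟨fenceTrunc γ n k, hγ.continuous_fenceTrunc k⟩
  have hstep : ∀ k, (R k).Homotopic (R (k + 1)) := fun k =>
    (hγ.specializes_or_succ k).elim
      (fun h => ContinuousMap.homotopic_of_forall_specializes _ _ (specializes_fenceTrunc_succ h))
      (fun h => (ContinuousMap.homotopic_of_forall_specializes _ _
        (fenceTrunc_succ_specializes h)).symm)
  have hchain : ∀ k, (R 0).Homotopic (R k) := fun k =>
    Nat.rec (.refl _) (fun k ih => ih.trans (hstep k)) k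
  have hconst : R 0 = ContinuousMap.const _ ⟨γ 0, 0, ⟨le_rfl, hn⟩, rfl⟩ :=
    ContinuousMap.ext fun x => Subtype.ext (coe_fenceTrunc_zero x)
  have hid : R (n - 1).toNat = ContinuousMap.id _ :=
    ContinuousMap.ext (fenceTrunc_of_le (by omega))
  have h := (hchain (n - 1).toNat).symm
  rw [hid, hconst] at h
  exact (contractible_iff_id_nullhomotopic _).2 ⟨_, h⟩

end IsFence

end FenceTrunc

section Khalimsky

def khalNhd (n : ℤ) : Set ℤ := {m | m = n ∨ n % 2 = 0 ∧ (m = n - 1 ∨ m = n + 1)}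

theorem khalNhd_mem_and_self_mem (n : ℤ) :
    khalNhd n ∈ {s : Set ℤ | ∃ k : ℤ, (Odd k ∧ s = {k}) ∨ (Even k ∧ s = {k - 1, k, k + 1})} ∧
      n ∈ khalNhd n := by
  refine ⟨⟨n, ?_⟩, Or.inl rfl⟩
  rcases Int.emod_two_eq_zero_or_one n with h | h
  · refine Or.inr ⟨Int.even_iff.2 h, ?_⟩
    ext m
    simp only [khalNhd, mem_ofPred_eq, mem_insert_iff, mem_singleton_iff]
    omega
  · refine Or.inl ⟨Int.odd_iff.2 h, ?_⟩
    ext m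
    simp only [khalNhd, mem_ofPred_eq, mem_singleton_iff]
    omega

theorem khalNhd_subset {n : ℤ} {s : Set ℤ}
    (hs : s ∈ {s : Set ℤ | ∃ k : ℤ, (Odd k ∧ s = {k}) ∨ (Even k ∧ s = {k - 1, k, k + 1})})
    (hn : n ∈ s) : khalNhd n ⊆ s := by
  obtain ⟨k, ⟨hk, rfl⟩ | ⟨hk, rfl⟩⟩ := hs <;> intro m hm <;>
    simp only [khalNhd, mem_ofPred_eq, mem_insert_iff, mem_singleton_iff] at hn hm ⊢ <;>
    simp only [Int.odd_iff, Int.even_iff] at hk <;> omega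

theorem khal_specializes_iff {m n : ℤ} :
    @Specializes ℤ khal m n ↔ m = n ∨ n % 2 = 0 ∧ (m = n - 1 ∨ m = n + 1) :=
  specializes_generateFrom_iff khalNhd_mem_and_self_mem fun _ _ => khalNhd_subset

theorem alexandrovDiscrete_khal : @AlexandrovDiscrete ℤ khal :=
  alexandrovDiscrete_generateFrom khalNhd_mem_and_self_mem fun _ _ => khalNhd_subset

instance alexandrovDiscrete_khalPlane : @AlexandrovDiscrete (ℤ × ℤ) khalPlane :=
  @Prod.instAlexandrovDiscrete ℤ ℤ khal khal alexandrovDiscrete_khal alexandrovDiscrete_khal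

theorem khalPlane_specializes_iff {p q : ℤ × ℤ} :
    @Specializes _ khalPlane p q ↔
      (p.1 = q.1 ∨ q.1 % 2 = 0 ∧ (p.1 = q.1 - 1 ∨ p.1 = q.1 + 1)) ∧
        (p.2 = q.2 ∨ q.2 % 2 = 0 ∧ (p.2 = q.2 - 1 ∨ p.2 = q.2 + 1)) := by
  rw [← khal_specializes_iff, ← khal_specializes_iff]
  exact @specializes_prod ℤ ℤ khal khal p.1 q.1 p.2 q.2

theorem isPurePt_iff {p : ℤ × ℤ} : IsPurePt p ↔ p.1 % 2 = p.2 % 2 := by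
  rw [IsPurePt, Int.even_iff, Int.even_iff, Int.odd_iff, Int.odd_iff]
  omega

end Khalimsky

section KhalimskyPlane

attribute [local instance] khalPlane

def cycDx (i : ℤ) : ℤ :=
  if i % 8 ≤ 1 ∨ i % 8 = 7 then 1 else if 3 ≤ i % 8 ∧ i % 8 ≤ 5 then -1 else 0

/-- `adjCycle p` runs counterclockwise through the eight neighbours of `p`, starting at
`p + (1, 0)`; the second coordinate lags the first by a quarter turn. -/
def adjCycle (p : ℤ × ℤ) (i : ℤ) : ℤ × ℤ := (p.1 + cycDx i, p.2 + cycDx (i - 2))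

theorem cycDx_cases (i : ℤ) :
    (i % 8 ≤ 1 ∨ i % 8 = 7) ∧ cycDx i = 1 ∨ (3 ≤ i % 8 ∧ i % 8 ≤ 5) ∧ cycDx i = -1 ∨
      (i % 8 = 2 ∨ i % 8 = 6) ∧ cycDx i = 0 := by
  unfold cycDx
  split_ifs <;> omega

theorem exists_cycDx_eq : ∀ dx ∈ Finset.Icc (-1 : ℤ) 1, ∀ dy ∈ Finset.Icc (-1 : ℤ) 1,
    (dx, dy) ≠ (0, 0) → ∃ i ∈ Finset.range 8, cycDx i = dx ∧ cycDx (i - 2) = dy := by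
  decide

variable {p : ℤ × ℤ} {J : Set (ℤ × ℤ)}

theorem adjCycle_eq_adjCycle_iff {i j : ℤ} : adjCycle p i = adjCycle p j ↔ i % 8 = j % 8 := by
  simp only [adjCycle, Prod.ext_iff, add_right_inj]
  rcases cycDx_cases i with h₁ | h₁ | h₁ <;> rcases cycDx_cases (i - 2) with h₂ | h₂ | h₂ <;>
    rcases cycDx_cases j with h₃ | h₃ | h₃ <;> rcases cycDx_cases (j - 2) with h₄ | h₄ | h₄ <;>
    omega

theorem adjCycle_specializes (hp : p.1 % 2 = p.2 % 2) {i j : ℤ}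
    (h : adjCycle p i ⤳ adjCycle p j) : (i - j) % 8 = 0 ∨ (i - j) % 8 = 1 ∨ (i - j) % 8 = 7 := by
  simp only [khalPlane_specializes_iff, adjCycle] at h
  rcases cycDx_cases i with h₁ | h₁ | h₁ <;> rcases cycDx_cases (i - 2) with h₂ | h₂ | h₂ <;>
    rcases cycDx_cases j with h₃ | h₃ | h₃ <;> rcases cycDx_cases (j - 2) with h₄ | h₄ | h₄ <;>
    omega

theorem adjCycle_specializes_or_succ (hp : p.1 % 2 = p.2 % 2) (i : ℤ) :
    adjCycle p i ⤳ adjCycle p (i + 1) ∨ adjCycle p (i + 1) ⤳ adjCycle p i := by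
  simp only [khalPlane_specializes_iff, adjCycle]
  rcases cycDx_cases i with h₁ | h₁ | h₁ <;> rcases cycDx_cases (i - 2) with h₂ | h₂ | h₂ <;>
    rcases cycDx_cases (i + 1) with h₃ | h₃ | h₃ <;>
    rcases cycDx_cases (i + 1 - 2) with h₄ | h₄ | h₄ <;> omega

theorem isFence_adjCycle (hp : p.1 % 2 = p.2 % 2) (a : ℤ) {n : ℤ} (hn : n ≤ 7) :
    IsFence (fun i => adjCycle p (a + i)) n where
  specializes_or_succ i := by simpa only [add_assoc] using adjCycle_specializes_or_succ hp (a + i)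
  injOn i hi j hj h := by
    have := adjCycle_eq_adjCycle_iff.1 h
    simp only [mem_Ico] at hi hj
    omega
  le_succ_of_specializes i hi j hj h := by
    have := adjCycle_specializes hp h
    simp only [mem_Ico] at hi hj
    omega

theorem adjCycle_mem_image_iff {a n s : ℤ} :
    adjCycle p s ∈ (fun i => adjCycle p (a + i)) '' Ico 0 n ↔ (s - a) % 8 < n := by
  constructor
  · rintro ⟨i, hi, h⟩
    have := adjCycle_eq_adjCycle_iff.1 h
    simp only [mem_Ico] at hi
    omega
  · exact fun h => ⟨(s - a) % 8, ⟨by omega, h⟩, adjCycle_eq_adjCycle_iff.2 (by omega)⟩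

theorem adjSet_eq_range_adjCycle (hp : p.1 % 2 = p.2 % 2) :
    adjSet khalPlane p = range (adjCycle p) := by
  ext q
  rw [mem_adjSet_iff]
  constructor
  · rintro ⟨hne, h⟩
    simp only [khalPlane_specializes_iff] at h
    obtain ⟨i, -, h₁, h₂⟩ := exists_cycDx_eq (q.1 - p.1) (Finset.mem_Icc.2 ⟨by omega, by omega⟩)
      (q.2 - p.2) (Finset.mem_Icc.2 ⟨by omega, by omega⟩) fun h => by
        obtain ⟨h₁, h₂⟩ := Prod.ext_iff.1 h
        exact hne (Prod.ext (by omega) (by omega))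
    exact ⟨i, Prod.ext (by simp only [adjCycle]; omega) (by simp only [adjCycle]; omega)⟩
  · rintro ⟨i, rfl⟩
    simp only [ne_eq, Prod.ext_iff, khalPlane_specializes_iff, adjCycle]
    rcases cycDx_cases i with h₁ | h₁ | h₁ <;> rcases cycDx_cases (i - 2) with h₂ | h₂ | h₂ <;>
      omega

theorem diff_singleton_eq_adjSet_of_pure (hp : p.1 % 2 = p.2 % 2) :
    minOpenNhd khalPlane p \ {p} = adjSet khalPlane p ∨ closure {p} \ {p} = adjSet khalPlane p := by
  rcases Int.emod_two_eq_zero_or_one p.1 with h | h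
  · refine Or.inl (minOpenNhd_diff_singleton_eq_adjSet fun q hq => ?_)
    rw [mem_adjSet_iff] at hq
    simp only [khalPlane_specializes_iff, ne_eq, Prod.ext_iff] at hq ⊢
    omega
  · refine Or.inr (closure_singleton_diff_eq_adjSet fun q hq => ?_)
    rw [mem_adjSet_iff] at hq
    simp only [khalPlane_specializes_iff, ne_eq, Prod.ext_iff] at hq ⊢
    omega

theorem adjSet_eq_of_mixed (hp : p.1 % 2 ≠ p.2 % 2) :
    adjSet khalPlane p = {(p.1 - 1, p.2), (p.1 + 1, p.2), (p.1, p.2 - 1), (p.1, p.2 + 1)} := by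
  ext q
  simp only [mem_adjSet_iff, khalPlane_specializes_iff, mem_insert_iff, mem_singleton_iff,
    ne_eq, Prod.ext_iff]
  omega

theorem diff_singleton_eq_of_mixed (hp : p.1 % 2 ≠ p.2 % 2) :
    minOpenNhd khalPlane p \ {p} = {(p.1 - 1, p.2), (p.1 + 1, p.2)} ∧
        closure {p} \ {p} = {(p.1, p.2 - 1), (p.1, p.2 + 1)} ∨
      minOpenNhd khalPlane p \ {p} = {(p.1, p.2 - 1), (p.1, p.2 + 1)} ∧
        closure {p} \ {p} = {(p.1 - 1, p.2), (p.1 + 1, p.2)} := by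
  simp only [Set.ext_iff, Set.mem_sdiff, mem_minOpenNhd_iff, ← specializes_iff_mem_closure,
    khalPlane_specializes_iff, mem_insert_iff, mem_singleton_iff, Prod.ext_iff]
  rcases Int.emod_two_eq_zero_or_one p.1 with h | h
  · exact Or.inl ⟨fun q => by omega, fun q => by omega⟩
  · exact Or.inr ⟨fun q => by omega, fun q => by omega⟩

theorem mem_iff_notMem_of_mixed (hp : p.1 % 2 ≠ p.2 % 2)
    (hsub : adjSet khalPlane p ∩ J ⊂ adjSet khalPlane p) (hne : (adjSet khalPlane p ∩ J).Nonempty)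
    (hconn : IsPreconnected (adjSet khalPlane p ∩ J)) :
    ((p.1 - 1, p.2) ∈ J ↔ (p.1 + 1, p.2) ∉ J) ∨ ((p.1, p.2 - 1) ∈ J ↔ (p.1, p.2 + 1) ∉ J) := by
  rw [adjSet_eq_of_mixed hp] at hsub hne hconn
  by_contra hJ
  simp only [not_or, not_iff] at hJ
  obtain ⟨hLR, hDU⟩ := hJ
  by_cases hL : (p.1 - 1, p.2) ∈ J <;> by_cases hD : (p.1, p.2 - 1) ∈ J
  · exact hsub.2 fun x hx => ⟨hx, by rcases hx with rfl | rfl | rfl | rfl <;> tauto⟩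
  · rw [insert_inter_of_mem hL, insert_inter_of_mem (by tauto), insert_inter_of_notMem hD,
      singleton_inter_eq_empty.2 (by tauto), insert_empty_eq] at hconn
    exact not_isPreconnected_pair (by rw [khalPlane_specializes_iff]; omega)
      (by rw [khalPlane_specializes_iff]; omega) hconn
  · rw [insert_inter_of_notMem hL, insert_inter_of_notMem (by tauto), insert_inter_of_mem hD,
      singleton_inter_of_mem (by tauto)] at hconn
    exact not_isPreconnected_pair (by rw [khalPlane_specializes_iff]; omega)
      (by rw [khalPlane_specializes_iff]; omega) hconn
  · obtain ⟨x, hx, hxJ⟩ := hne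
    rcases hx with rfl | rfl | rfl | rfl <;> tauto

theorem jInterior_subset_compl : jInterior J ⊆ Jᶜ := by
  rintro q ⟨_, ⟨r, -, rfl, -⟩, hq⟩
  exact connectedComponentIn_subset _ _ hq

theorem mem_jInterior_of_mem_adjSet {q : ℤ × ℤ} (hp : p ∈ jInterior J)
    (hq : q ∈ adjSet khalPlane p) (hqJ : q ∉ J) : q ∈ jInterior J := by
  obtain ⟨_, ⟨r, hr, rfl, hfin⟩, hpC⟩ := hp
  refine ⟨_, ⟨r, hr, rfl, hfin⟩, ?_⟩
  rw [connectedComponentIn_eq hpC]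
  exact (isPreconnected_pair_of_specializes_or (mem_adjSet_iff.1 hq).2).subset_connectedComponentIn
    (mem_insert p {q})
    (insert_subset_iff.2 ⟨connectedComponentIn_subset _ _ hpC, singleton_subset_iff.2 hqJ⟩)
    (mem_insert_of_mem p rfl)

theorem inter_jInterior_eq_diff (hp : p ∈ jInterior J) {P : Set (ℤ × ℤ)}
    (hP : P ⊆ adjSet khalPlane p) : P ∩ jInterior J = P \ J :=
  Subset.antisymm (fun _ hq => ⟨hq.1, jInterior_subset_compl hq.2⟩)
    fun _ hq => ⟨hq.1, mem_jInterior_of_mem_adjSet hp (hP hq.1) hq.2⟩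

theorem isWeakPt_of_contractibleSpace (hp : p ∈ jInterior J)
    (h : ContractibleSpace ↥((minOpenNhd khalPlane p \ {p}) \ J) ∨
      ContractibleSpace ↥((closure {p} \ {p}) \ J)) : IsWeakPt (jInterior J) p := by
  rwa [IsWeakPt, inter_jInterior_eq_diff hp minOpenNhd_diff_singleton_subset_adjSet,
    inter_jInterior_eq_diff hp closure_singleton_diff_subset_adjSet]

theorem isWeakPt_of_mixed (hp : p ∈ jInterior J) (hpm : p.1 % 2 ≠ p.2 % 2)
    (hsub : adjSet khalPlane p ∩ J ⊂ adjSet khalPlane p) (hne : (adjSet khalPlane p ∩ J).Nonempty)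
    (hconn : IsPreconnected (adjSet khalPlane p ∩ J)) : IsWeakPt (jInterior J) p := by
  refine isWeakPt_of_contractibleSpace hp ?_
  have hpair := mem_iff_notMem_of_mixed hpm hsub hne hconn
  rcases diff_singleton_eq_of_mixed hpm with ⟨hU, hC⟩ | ⟨hU, hC⟩ <;> rw [hU, hC] <;>
    rcases hpair with h | h
  exacts [Or.inl (contractibleSpace_diff_pair h), Or.inr (contractibleSpace_diff_pair h),
    Or.inr (contractibleSpace_diff_pair h), Or.inl (contractibleSpace_diff_pair h)]

/-- Some point `adjCycle p m` of the 8-cycle `A(p)` is off `J`; the rest of the cycle is a fence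
on which the preconnected set `A(p) ∩ J` occupies an interval `[l, u]` of indices, and `A(p) \ J`
is the complementary run of the cycle. -/
theorem adjSet_diff_eq_image_adjCycle (hp : p.1 % 2 = p.2 % 2)
    (hsub : adjSet khalPlane p ∩ J ⊂ adjSet khalPlane p) (hne : (adjSet khalPlane p ∩ J).Nonempty)
    (hconn : IsPreconnected (adjSet khalPlane p ∩ J)) :
    ∃ a n, 0 < n ∧ n ≤ 7 ∧ adjSet khalPlane p \ J = (fun i => adjCycle p (a + i)) '' Ico 0 n := by
  set K := adjSet khalPlane p ∩ J
  have hA := adjSet_eq_range_adjCycle hp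
  obtain ⟨_, hmA, hmK⟩ := exists_of_ssubset hsub
  rw [hA] at hmA
  obtain ⟨m, rfl⟩ := hmA
  have hγ := isFence_adjCycle hp (m + 1) (n := 7) le_rfl
  have hKlt : ∀ s, adjCycle p s ∈ K → (s - (m + 1)) % 8 < 7 := fun s hs => by
    by_contra h
    have hsm : adjCycle p s = adjCycle p m := adjCycle_eq_adjCycle_iff.2 (by omega)
    exact hmK (hsm ▸ hs)
  have hKγ : K ⊆ (fun i => adjCycle p (m + 1 + i)) '' Ico 0 7 := fun x hx => by
    have hxA := hx.1
    rw [hA] at hxA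
    obtain ⟨s, rfl⟩ := hxA
    exact adjCycle_mem_image_iff.2 (hKlt s hx)
  have hidx : ∃ i, 0 ≤ i ∧ i < 7 ∧ adjCycle p (m + 1 + i) ∈ K := by
    obtain ⟨x, hx⟩ := hne
    obtain ⟨i, hi, rfl⟩ := hKγ hx
    exact ⟨i, hi.1, hi.2, hx⟩
  obtain ⟨l, ⟨hl0, hl7, hlK⟩, hl⟩ := Int.exists_least_of_bdd ⟨0, fun i hi => hi.1⟩ hidx
  obtain ⟨u, ⟨-, hu7, huK⟩, hu⟩ := Int.exists_greatest_of_bdd ⟨7, fun i hi => hi.2.1.le⟩ hidx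
  have hlu := hu l ⟨hl0, hl7, hlK⟩
  have hK : ∀ s, adjCycle p s ∈ K ↔ l ≤ (s - (m + 1)) % 8 ∧ (s - (m + 1)) % 8 ≤ u := by
    intro s
    have hs : adjCycle p s = adjCycle p (m + 1 + (s - (m + 1)) % 8) :=
      adjCycle_eq_adjCycle_iff.2 (by omega)
    constructor
    · intro h
      have h7 := hKlt s h
      rw [hs] at h
      exact ⟨hl _ ⟨by omega, h7, h⟩, hu _ ⟨by omega, h7, h⟩⟩
    · rintro ⟨h₁, h₂⟩
      rw [hs]
      exact hγ.mem_of_isPreconnected hconn hKγ hl0 h₁ h₂ hu7 hlK huK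
  refine ⟨m + u + 2, 7 - u + l, by omega, by omega, ?_⟩
  ext q
  rw [hA]
  constructor
  · rintro ⟨⟨s, rfl⟩, hqJ⟩
    have := (hK s).not.1 fun h => hqJ h.2
    exact adjCycle_mem_image_iff.2 (by omega)
  · rintro ⟨i, hi, rfl⟩
    refine ⟨mem_range_self _, fun hJ => ?_⟩
    have := (hK _).1 ⟨hA ▸ mem_range_self _, hJ⟩
    simp only [mem_Ico] at hi
    omega

end KhalimskyPlane

theorem stmt18_general (J : Set (ℤ × ℤ)) (p : ℤ × ℤ)
    (hp : p ∈ jInterior J)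
    (hsub : adjSet khalPlane p ∩ J ⊂ adjSet khalPlane p)
    (hne : (adjSet khalPlane p ∩ J).Nonempty)
    (hconn : @IsConnected _ khalPlane (adjSet khalPlane p ∩ J)) :
    IsWeakPt (jInterior J) p ∧
      (IsPurePt p →
        IsCOTSArc khalPlane (adjSet khalPlane p \ J) ∧
        @ContractibleSpace (↥(adjSet khalPlane p \ J))
          (TopologicalSpace.induced Subtype.val khalPlane)) := by
  let _ : TopologicalSpace (ℤ × ℤ) := khalPlane
  rcases eq_or_ne (p.1 % 2) (p.2 % 2) with hpure | hmixed
  · obtain ⟨a, n, hn, hn7, hA⟩ :=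
      adjSet_diff_eq_image_adjCycle hpure hsub hne hconn.isPreconnected
    have hγ := isFence_adjCycle hpure a hn7
    have hcontr : ContractibleSpace ↥(adjSet khalPlane p \ J) := hA ▸ hγ.contractibleSpace hn
    refine ⟨isWeakPt_of_contractibleSpace hp ?_, fun _ => ⟨hA ▸ hγ.isCOTSArc hn, hcontr⟩⟩
    rcases diff_singleton_eq_adjSet_of_pure hpure with h | h
    · exact Or.inl (h ▸ hcontr)
    · exact Or.inr (h ▸ hcontr)
  · exact ⟨isWeakPt_of_mixed hp hmixed hsub hne hconn.isPreconnected,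
      fun hpure => absurd (isPurePt_iff.1 hpure) hmixed⟩

/-- If `p` is interior to a Jordan curve `J` and `A(p) ∩ J` is a proper nonempty
connected subset of `A(p)`, then `p` is a weak point of `int(J)`; if moreover `p` is
pure then `A(p) \ J` is a COTS-arc, hence contractible. -/
theorem stmt18 (J : Set (ℤ × ℤ)) (hJ : IsJordanCurve khalPlane J) (p : ℤ × ℤ)
    (hp : p ∈ jInterior J)
    (hsub : adjSet khalPlane p ∩ J ⊂ adjSet khalPlane p)
    (hne : (adjSet khalPlane p ∩ J).Nonempty)
    (hconn : @IsConnected _ khalPlane (adjSet khalPlane p ∩ J)) :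
    IsWeakPt (jInterior J) p ∧
      (IsPurePt p →
        IsCOTSArc khalPlane (adjSet khalPlane p \ J) ∧
        @ContractibleSpace (↥(adjSet khalPlane p \ J))
          (TopologicalSpace.induced Subtype.val khalPlane)) :=
  stmt18_general J p hp hsub hne hconn
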